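/- Let G be a graph without a universal vertex. Then G has a normal Helly circular-arc representation if and only if there exists a cyclic ordering of its maximal cliques such that (i) for every vertex v, the maximal cliques containing v appear consecutively, and (ii) for every universal pair u, w, the maximal cliques containing both u and w appear consecutively. -/

import Mathlib

open Set

noncomputable section

/-- The closed arc on the circle `AddCircle L` (circle of circumference `L`) whose
tail is `t` and which proceeds clockwise for length `len` (ending at its head
`t + len`). -/
def Arc (L : ℝ) (t : AddCircle L) (len : ℝ) : Set (AddCircle L) :=
  {x : AddCircle L | ∃ s : ℝ, 0 ≤ s ∧ s ≤ len ∧ x = t + (s : AddCircle L)}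

/-- A circular-arc representation of the (finite simple) graph `G` on a circle of
circumference `L`: every vertex `v` gets a closed arc (recorded by its tail and its
length, with `0 ≤ len v < L`), and two arcs of distinct vertices intersect iff the
vertices are adjacent. -/
structure CARep {V : Type*} (G : SimpleGraph V) (L : ℝ) where
  hL : 0 < L
  tail : V → AddCircle L
  len : V → ℝ
  len_nonneg : ∀ v, 0 ≤ len v
  len_lt : ∀ v, len v < L
  inter_iff : ∀ u v : V, u ≠ v →
    ((Arc L (tail u) (len u) ∩ Arc L (tail v) (len v)).Nonempty ↔ G.Adj u v)

namespace CARep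

variable {V : Type*} {G : SimpleGraph V} {L : ℝ}

/-- The arc of vertex `v`. -/
def arc (R : CARep G L) (v : V) : Set (AddCircle L) := Arc L (R.tail v) (R.len v)

/-- The head (clockwise endpoint) of the arc of `v`. -/
def head (R : CARep G L) (v : V) : AddCircle L := R.tail v + ((R.len v : ℝ) : AddCircle L)

/-- A representation is Helly if every nonempty family of pairwise intersecting arcs
has a common point. -/
def Helly (R : CARep G L) : Prop :=
  ∀ S : Set V, S.Nonempty → (∀ u ∈ S, ∀ v ∈ S, (R.arc u ∩ R.arc v).Nonempty) →
    (⋂ v ∈ S, R.arc v).Nonempty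

/-- A representation is normal if the intersection of any two arcs is empty or
connected. -/
def Normal (R : CARep G L) : Prop :=
  ∀ u v : V, u ≠ v → IsPreconnected (R.arc u ∩ R.arc v)

/-- A representation is proper if no arc is properly contained in another. -/
def Proper (R : CARep G L) : Prop := ∀ u v : V, ¬ R.arc u ⊂ R.arc v

/-- A representation is unit if every arc has length exactly one. -/
def IsUnit (R : CARep G L) : Prop := ∀ v, R.len v = 1

end CARep

/-- A partial circular-arc representation of `G`: a circular-arc representation of the
subgraph of `G` induced by the set `pre` of predrawn vertices.  (The fields `tail`/`len`
are total functions; only their values on `pre` are meaningful.) -/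
structure PartialCARep {V : Type*} (G : SimpleGraph V) (L : ℝ) where
  hL : 0 < L
  pre : Set V
  tail : V → AddCircle L
  len : V → ℝ
  len_nonneg : ∀ v ∈ pre, 0 ≤ len v
  len_lt : ∀ v ∈ pre, len v < L
  inter_iff : ∀ u ∈ pre, ∀ v ∈ pre, u ≠ v →
    ((Arc L (tail u) (len u) ∩ Arc L (tail v) (len v)).Nonempty ↔ G.Adj u v)

namespace PartialCARep

variable {V : Type*} {G : SimpleGraph V} {L : ℝ}

/-- The (predrawn) arc of vertex `v`. -/
def arc (R' : PartialCARep G L) (v : V) : Set (AddCircle L) := Arc L (R'.tail v) (R'.len v)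

/-- The head (clockwise endpoint) of the predrawn arc of `v`. -/
def head (R' : PartialCARep G L) (v : V) : AddCircle L :=
  R'.tail v + ((R'.len v : ℝ) : AddCircle L)

/-- The partial representation is Helly. -/
def Helly (R' : PartialCARep G L) : Prop :=
  ∀ S : Set V, S ⊆ R'.pre → S.Nonempty →
    (∀ u ∈ S, ∀ v ∈ S, (R'.arc u ∩ R'.arc v).Nonempty) →
    (⋂ v ∈ S, R'.arc v).Nonempty

/-- The partial representation is normal. -/
def Normal (R' : PartialCARep G L) : Prop :=
  ∀ u ∈ R'.pre, ∀ v ∈ R'.pre, u ≠ v → IsPreconnected (R'.arc u ∩ R'.arc v)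

/-- The partial representation is proper. -/
def Proper (R' : PartialCARep G L) : Prop :=
  ∀ u ∈ R'.pre, ∀ v ∈ R'.pre, ¬ R'.arc u ⊂ R'.arc v

/-- `Pre(C)`: the set of predrawn arcs of vertices of `C`. -/
def PreArcs (R' : PartialCARep G L) (C : Set V) : Set (Set (AddCircle L)) :=
  {A | ∃ v ∈ R'.pre ∩ C, A = R'.arc v}

/-- All predrawn arcs. -/
def AllArcs (R' : PartialCARep G L) : Set (Set (AddCircle L)) :=
  {A | ∃ v ∈ R'.pre, A = R'.arc v}

/-- `Reg⁺(C)`: the intersection of the arcs of `Pre(C)` (the whole circle if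
`Pre(C) = ∅`). -/
def RegPlus (R' : PartialCARep G L) (C : Set V) : Set (AddCircle L) := ⋂₀ R'.PreArcs C

/-- `Reg⁻(C)`: the union of the predrawn arcs not in `Pre(C)`. -/
def RegMinus (R' : PartialCARep G L) (C : Set V) : Set (AddCircle L) :=
  ⋃₀ (R'.AllArcs \ R'.PreArcs C)

/-- The region `Reg(C) = Reg⁺(C) \ Reg⁻(C)`. -/
def Reg (R' : PartialCARep G L) (C : Set V) : Set (AddCircle L) :=
  R'.RegPlus C \ R'.RegMinus C

/-- `J` is a gap of `C`: a connected component of the complement of `Reg(C)`. -/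
def IsGap (R' : PartialCARep G L) (C : Set V) (J : Set (AddCircle L)) : Prop :=
  ∃ x ∈ (R'.Reg C)ᶜ, J = connectedComponentIn (R'.Reg C)ᶜ x

end PartialCARep

/-- `R` extends the partial representation `R'`: predrawn vertices keep their arcs. -/
def CARep.Extends {V : Type*} {G : SimpleGraph V} {L : ℝ}
    (R : CARep G L) (R' : PartialCARep G L) : Prop :=
  ∀ v ∈ R'.pre, R.arc v = R'.arc v

/-- An interval representation of `G`: closed intervals `[lo v, hi v]` on the real
line, intersecting iff the vertices are adjacent. -/
structure IntervalRep {V : Type*} (G : SimpleGraph V) where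
  lo : V → ℝ
  hi : V → ℝ
  lo_le_hi : ∀ v, lo v ≤ hi v
  inter_iff : ∀ u v : V, u ≠ v →
    ((Set.Icc (lo u) (hi u) ∩ Set.Icc (lo v) (hi v)).Nonempty ↔ G.Adj u v)

/-- The interval of vertex `v`. -/
def IntervalRep.itv {V : Type*} {G : SimpleGraph V} (R : IntervalRep G) (v : V) : Set ℝ :=
  Set.Icc (R.lo v) (R.hi v)

/-- `C` is a maximal clique of `G`. -/
def IsMaxClique {V : Type*} (G : SimpleGraph V) (C : Set V) : Prop :=
  G.IsClique C ∧ ∀ D : Set V, G.IsClique D → C ⊆ D → C = D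

/-- The closed neighborhood `N[v]`. -/
def closedNbhd {V : Type*} (G : SimpleGraph V) (v : V) : Set V :=
  insert v {u | G.Adj v u}

/-- `v` is a universal vertex: adjacent to all other vertices. -/
def IsUniversalVertex {V : Type*} (G : SimpleGraph V) (v : V) : Prop :=
  ∀ w, w ≠ v → G.Adj v w

/-- `u, w` form a universal pair: they are adjacent and every vertex is adjacent
to `u` or to `w`. -/
def IsUniversalPair {V : Type*} (G : SimpleGraph V) (u w : V) : Prop :=
  G.Adj u w ∧ ∀ x, G.Adj u x ∨ G.Adj w x

/-- The cyclic interval of length `m` starting at `a` in `ZMod k`. -/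
def ZInterval {k : ℕ} (a : ZMod k) (m : ℕ) : Set (ZMod k) :=
  {x | ∃ i : ℕ, i < m ∧ x = a + (i : ZMod k)}

/-- `T` is consecutive in the cyclic ordering induced by the labelling `f`. -/
def CyclicConsec {α : Type*} {k : ℕ} (f : α → ZMod k) (T : Set α) : Prop :=
  ∃ (a : ZMod k) (m : ℕ), T = f ⁻¹' ZInterval a m

/-- The cyclic position (in `ZMod k`) of an element under the enumeration `e`;
this turns the linear ordering `e` into a cyclic ordering. -/
def zOrd {α : Type*} {k : ℕ} (e : α ≃ Fin k) (x : α) : ZMod k := ((e x : ℕ) : ZMod k)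

/-- Cyclic betweenness in `ZMod k`: starting at `a` and going forward one meets
`b` and then `c` within one revolution. -/
def ZBtw {k : ℕ} (a b c : ZMod k) : Prop :=
  ∃ s t : ℕ, s ≤ t ∧ t < k ∧ b = a + (s : ZMod k) ∧ c = a + (t : ZMod k)

/-- Cyclic betweenness on the circle: starting at `a` and going clockwise one meets
`b` and then `c` within one revolution. -/
def CBtw (L : ℝ) (a b c : AddCircle L) : Prop :=
  ∃ s t : ℝ, 0 ≤ s ∧ s ≤ t ∧ t < L ∧ b = a + (s : AddCircle L) ∧ c = a + (t : AddCircle L)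

/-- The position of the point `x` in the linear order of circle points obtained by
cutting the circle at the point `p`: the unique `s ∈ [0, L)` with `x = p + s`. -/
noncomputable def circPos (L : ℝ) (hL : 0 < L) (p x : AddCircle L) : ℝ :=
  haveI : Fact (0 < L) := ⟨hL⟩
  ((AddCircle.equivIco L 0) (x - p) : ℝ)

/-- Two arcs are in non-normal position: their intersection is nonempty and
disconnected. -/
def NonNormalPos {L : ℝ} (A B : Set (AddCircle L)) : Prop :=
  (A ∩ B).Nonempty ∧ ¬ IsPreconnected (A ∩ B)

/-! ### Auxiliary geometric lemmas about arcs on the circle -/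

section CircleGeometry

variable {L : ℝ} (hL : 0 < L)

theorem circPos_mem (p x : AddCircle L) : circPos L hL p x ∈ Ico 0 L := by
  haveI : Fact (0 < L) := ⟨hL⟩
  have := ((AddCircle.equivIco L 0) (x - p)).2
  simpa [circPos] using this

theorem circPos_spec (p x : AddCircle L) :
    x = p + ((circPos L hL p x : ℝ) : AddCircle L) := by
  haveI : Fact (0 < L) := ⟨hL⟩
  have h := (AddCircle.equivIco L 0).symm_apply_apply (x - p)
  have h2 : (AddCircle.equivIco L 0).symm ((AddCircle.equivIco L 0) (x-p))
      = ((((AddCircle.equivIco L 0) (x-p)) : ℝ) : AddCircle L) := rfl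
  rw [h2] at h
  rw [circPos]
  rw [h]
  abel

theorem circPos_add (p : AddCircle L) {s : ℝ} (h0 : 0 ≤ s) (h1 : s < L) :
    circPos L hL p (p + (s : AddCircle L)) = s := by
  haveI : Fact (0 < L) := ⟨hL⟩
  have : p + (s : AddCircle L) - p = ((s:ℝ) : AddCircle L) := by abel
  rw [circPos, this]
  show ((QuotientAddGroup.equivIcoMod hL 0 ((s:ℝ) : AddCircle L)) : ℝ) = s
  rw [QuotientAddGroup.equivIcoMod_coe]
  exact (toIcoMod_eq_self hL).2 ⟨h0, by simpa using h1⟩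

theorem mem_Arc_iff {t : AddCircle L} {l : ℝ} (hl1 : l < L) (x : AddCircle L) :
    x ∈ Arc L t l ↔ circPos L hL t x ≤ l := by
  constructor
  · rintro ⟨s, h0, h1, rfl⟩
    rw [circPos_add hL t h0 (lt_of_le_of_lt h1 hl1)]; exact h1
  · intro h
    exact ⟨circPos L hL t x, (circPos_mem hL t x).1, h, circPos_spec hL t x⟩

theorem circPos_shift (t t' x : AddCircle L) :
    (circPos L hL t t' ≤ circPos L hL t x ∧
      circPos L hL t' x = circPos L hL t x - circPos L hL t t') ∨
    (circPos L hL t x < circPos L hL t t' ∧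
      circPos L hL t' x = circPos L hL t x - circPos L hL t t' + L) := by
  set d := circPos L hL t t' with hd
  set s := circPos L hL t x with hs
  have hdm := circPos_mem hL t t'
  have hsm := circPos_mem hL t x
  have hx : x = t + ((s:ℝ) : AddCircle L) := circPos_spec hL t x
  have ht' : t' = t + ((d:ℝ) : AddCircle L) := circPos_spec hL t t'
  rcases le_or_gt d s with h | h
  · left
    refine ⟨h, ?_⟩
    have : x = t' + (((s - d : ℝ)) : AddCircle L) := by
      rw [ht', hx, AddCircle.coe_sub]; abel
    rw [this, circPos_add hL t' (by linarith) (by linarith [hsm.2, hdm.1])]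
  · right
    refine ⟨h, ?_⟩
    have hL0 : ((L:ℝ) : AddCircle L) = 0 := AddCircle.coe_period L
    have : x = t' + (((s - d + L : ℝ)) : AddCircle L) := by
      rw [ht', hx, AddCircle.coe_add, AddCircle.coe_sub, hL0]; abel
    rw [this, circPos_add hL t' (by linarith [hsm.1, hdm.2]) (by linarith [hdm.1])]

theorem mem_inter_arcs {t t' : AddCircle L} {l l' : ℝ} (hl0 : 0 ≤ l) (hl1 : l < L)
    (hl0' : 0 ≤ l') (hl1' : l' < L) (x : AddCircle L) :
    x ∈ Arc L t l ∩ Arc L t' l' ↔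
      (circPos L hL t x ≤ l ∧
        ((circPos L hL t t' ≤ circPos L hL t x ∧
            circPos L hL t x ≤ circPos L hL t t' + l') ∨
          circPos L hL t x ≤ circPos L hL t t' + l' - L)) := by
  set d := circPos L hL t t' with hd
  set s := circPos L hL t x with hs
  have hdm := circPos_mem hL t t'
  have hsm := circPos_mem hL t x
  rw [mem_inter_iff, mem_Arc_iff hL hl1, mem_Arc_iff hL hl1']
  rcases circPos_shift hL t t' x with ⟨h1, h2⟩ | ⟨h1, h2⟩
  · rw [← hd, ← hs] at h1 h2
    rw [h2]
    constructor
    · rintro ⟨hsl, hsd⟩; exact ⟨hsl, Or.inl ⟨h1, by linarith⟩⟩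
    · rintro ⟨hsl, (⟨_, hh⟩ | hh)⟩
      · exact ⟨hsl, by linarith⟩
      · exact ⟨hsl, by linarith⟩
  · rw [← hd, ← hs] at h1 h2
    rw [h2]
    constructor
    · rintro ⟨hsl, hsd⟩; exact ⟨hsl, Or.inr (by linarith)⟩
    · rintro ⟨hsl, (⟨hh, _⟩ | hh)⟩
      · linarith
      · exact ⟨hsl, by linarith⟩

theorem inter_arcs_nonempty_iff {t t' : AddCircle L} {l l' : ℝ} (hl0 : 0 ≤ l) (hl1 : l < L)
    (hl0' : 0 ≤ l') (hl1' : l' < L) :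
    (Arc L t l ∩ Arc L t' l').Nonempty ↔
      (circPos L hL t t' ≤ l ∨ L ≤ circPos L hL t t' + l') := by
  set d := circPos L hL t t' with hd
  have hdm := circPos_mem hL t t'
  constructor
  · rintro ⟨x, hx⟩
    rw [mem_inter_arcs hL hl0 hl1 hl0' hl1' x] at hx
    rcases hx with ⟨h1, (⟨h2, _⟩ | h2)⟩
    · left; linarith
    · right; linarith [(circPos_mem hL t x).1]
  · rintro (h | h)
    · refine ⟨t + ((d:ℝ) : AddCircle L), ?_⟩
      rw [mem_inter_arcs hL hl0 hl1 hl0' hl1']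
      rw [circPos_add hL t hdm.1 hdm.2]
      exact ⟨h, Or.inl ⟨le_refl _, by linarith⟩⟩
    · refine ⟨t, ?_⟩
      rw [mem_inter_arcs hL hl0 hl1 hl0' hl1']
      have h0 : circPos L hL t t = 0 := by
        have : t = t + ((0:ℝ):AddCircle L) := by
          norm_num
        nth_rewrite 2 [this]
        rw [circPos_add hL t le_rfl hL]
      rw [h0]
      exact ⟨hl0, Or.inr (by linarith)⟩

theorem circPos_self (t : AddCircle L) : circPos L hL t t = 0 := by
  have : t = t + ((0:ℝ):AddCircle L) := by norm_num
  nth_rewrite 2 [this]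
  rw [circPos_add hL t le_rfl hL]

theorem circPos_eq_zero {t t' : AddCircle L} (h : circPos L hL t t' = 0) : t' = t := by
  have := circPos_spec hL t t'
  rw [h] at this
  simpa using this

theorem Arc_eq_image (t : AddCircle L) (l : ℝ) :
    Arc L t l = (fun s : ℝ => t + ((s:ℝ) : AddCircle L)) '' Icc 0 l := by
  ext x
  simp only [Arc, mem_setOf_eq, mem_image, mem_Icc]
  constructor
  · rintro ⟨s, h0, h1, rfl⟩; exact ⟨s, ⟨h0, h1⟩, rfl⟩
  · rintro ⟨s, ⟨h0, h1⟩, rfl⟩; exact ⟨s, h0, h1, rfl⟩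

theorem isPreconnected_Arc (t : AddCircle L) (l : ℝ) : IsPreconnected (Arc L t l) := by
  rw [Arc_eq_image]
  exact (isPreconnected_Icc).image _
    (continuous_const.add (AddCircle.continuous_mk' L)).continuousOn

include hL in
theorem inter_arcs_eq_one {t t' : AddCircle L} {l l' : ℝ}
    (hl0 : 0 ≤ l) (hl1 : l < L) (hl0' : 0 ≤ l') (hl1' : l' < L)
    (hdl : circPos L hL t t' ≤ l) (hw : circPos L hL t t' + l' < L) :
    Arc L t l ∩ Arc L t' l' = Arc L t' (min (l - circPos L hL t t') l') := by
  set d := circPos L hL t t' with hd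
  have hdm := circPos_mem hL t t'
  have hmin1 : min (l - d) l' < L := lt_of_le_of_lt (min_le_right _ _) hl1'
  ext x
  rw [mem_inter_arcs hL hl0 hl1 hl0' hl1' x, mem_Arc_iff hL hmin1, ← hd]
  set s := circPos L hL t x with hs
  have hsm := circPos_mem hL t x
  rcases circPos_shift hL t t' x with ⟨h1, h2⟩ | ⟨h1, h2⟩ <;>
    rw [← hd, ← hs] at h1 h2 <;> rw [h2, le_min_iff]
  · constructor
    · rintro ⟨ha, (⟨_, hb⟩ | hb)⟩
      · exact ⟨by linarith, by linarith⟩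
      · exact ⟨by linarith, by linarith⟩
    · rintro ⟨ha, hb⟩
      exact ⟨by linarith, Or.inl ⟨h1, by linarith⟩⟩
  · constructor
    · rintro ⟨ha, (⟨hb, _⟩ | hb)⟩
      · exact absurd hb (not_le.2 h1)
      · exact absurd hb (by linarith [hsm.1])
    · rintro ⟨ha, hb⟩
      exact absurd hb (by push_neg; nlinarith [hsm.1, hdm.2])

include hL in
theorem inter_arcs_eq_two {t t' : AddCircle L} {l l' : ℝ}
    (hl0 : 0 ≤ l) (hl1 : l < L) (hl0' : 0 ≤ l') (hl1' : l' < L)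
    (hdl : l < circPos L hL t t') (hw : L ≤ circPos L hL t t' + l') :
    Arc L t l ∩ Arc L t' l' = Arc L t (min l (circPos L hL t t' + l' - L)) := by
  set d := circPos L hL t t' with hd
  have hmin1 : min l (d + l' - L) < L := lt_of_le_of_lt (min_le_left _ _) hl1
  ext x
  rw [mem_inter_arcs hL hl0 hl1 hl0' hl1' x, mem_Arc_iff hL hmin1, ← hd, le_min_iff]
  set s := circPos L hL t x with hs
  constructor
  · rintro ⟨ha, (⟨hb, _⟩ | hb)⟩
    · exact absurd ha (by push_neg; linarith)
    · exact ⟨ha, by linarith⟩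
  · rintro ⟨ha, hb⟩
    exact ⟨ha, Or.inr (by linarith)⟩

include hL in
theorem not_preconnected_of_two_overlaps {t t' : AddCircle L} {l l' : ℝ}
    (hl0 : 0 ≤ l) (hl1 : l < L) (hl0' : 0 ≤ l') (hl1' : l' < L)
    (hd0 : 0 < circPos L hL t t') (hdl : circPos L hL t t' ≤ l)
    (hw : L ≤ circPos L hL t t' + l') :
    ¬ IsPreconnected (Arc L t l ∩ Arc L t' l') := by
  haveI : Fact (0 < L) := ⟨hL⟩
  set d := circPos L hL t t' with hd
  have hdm := circPos_mem hL t t'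
  set e₂ : ℝ := min l (d + l' - L) with he₂
  have he₂0 : 0 ≤ e₂ := le_min hl0 (by linarith)
  have he₂d : e₂ < d := lt_of_le_of_lt (min_le_right _ _) (by linarith)
  set φ : ℝ → AddCircle L := fun s => t + ((s:ℝ) : AddCircle L) with hφ
  have hcont : Continuous φ := continuous_const.add (AddCircle.continuous_mk' L)
  set P₁ : Set (AddCircle L) := φ '' Icc d l with hP₁
  set P₂ : Set (AddCircle L) := φ '' Icc 0 e₂ with hP₂
  have hposφ : ∀ s : ℝ, 0 ≤ s → s < L → circPos L hL t (φ s) = s := fun s h0 h1 =>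
    circPos_add hL t h0 h1
  have hsplit : Arc L t l ∩ Arc L t' l' = P₁ ∪ P₂ := by
    ext x
    rw [mem_inter_arcs hL hl0 hl1 hl0' hl1' x]
    constructor
    · rintro ⟨h1, (⟨h2, _⟩ | h2)⟩
      · left; exact ⟨circPos L hL t x, ⟨h2, h1⟩, (circPos_spec hL t x).symm⟩
      · right
        exact ⟨circPos L hL t x, ⟨(circPos_mem hL t x).1, le_min h1 h2⟩,
          (circPos_spec hL t x).symm⟩
    · rintro (⟨s, ⟨h1, h2⟩, rfl⟩ | ⟨s, ⟨h1, h2⟩, rfl⟩)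
      · rw [hposφ s (by linarith) (by linarith)]
        exact ⟨h2, Or.inl ⟨h1, by linarith⟩⟩
      · rw [hposφ s h1 (by linarith [min_le_right l (d + l' - L)])]
        refine ⟨le_trans h2 (min_le_left _ _), Or.inr ?_⟩
        linarith [le_trans h2 (min_le_right l (d + l' - L))]
  have hP₁c : IsCompact P₁ := (isCompact_Icc).image hcont
  have hP₂c : IsCompact P₂ := (isCompact_Icc).image hcont
  have hdisj : Disjoint P₁ P₂ := by
    rw [disjoint_left]
    rintro x ⟨s, ⟨hs1, hs2⟩, rfl⟩ ⟨s', ⟨hs1', hs2'⟩, heq⟩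
    have h1 : circPos L hL t (φ s) = s := hposφ s (by linarith) (by linarith)
    have h2 : circPos L hL t (φ s') = s' := hposφ s' hs1'
      (by linarith [le_trans hs2' (min_le_right l (d + l' - L))])
    rw [heq, h1] at h2
    have : s' < s := by linarith [le_trans hs2' (le_of_lt he₂d)]
    linarith
  obtain ⟨U, W, hU, hW, hsub1, hsub2, hUW⟩ :=
    SeparatedNhds.of_isCompact_isCompact hP₁c hP₂c hdisj
  intro hpc
  have hne1 : (Arc L t l ∩ Arc L t' l' ∩ U).Nonempty := by
    refine ⟨φ d, ?_, hsub1 ⟨d, ⟨le_rfl, hdl⟩, rfl⟩⟩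
    rw [hsplit]; exact Or.inl ⟨d, ⟨le_rfl, hdl⟩, rfl⟩
  have hne2 : (Arc L t l ∩ Arc L t' l' ∩ W).Nonempty := by
    refine ⟨φ 0, ?_, hsub2 ⟨0, ⟨le_rfl, he₂0⟩, rfl⟩⟩
    rw [hsplit]; exact Or.inr ⟨0, ⟨le_rfl, he₂0⟩, rfl⟩
  have hcover : Arc L t l ∩ Arc L t' l' ⊆ U ∪ W := by
    rw [hsplit]; exact union_subset_union hsub1 hsub2
  obtain ⟨x, hx, hxU, hxW⟩ := hpc U W hU hW hcover hne1 hne2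
  exact (disjoint_left.1 hUW) hxU hxW

include hL in
/-- A nonempty preconnected ("normal") intersection of two arcs is an arc. -/
theorem inter_arcs_eq_arc {t t' : AddCircle L} {l l' : ℝ}
    (hl0 : 0 ≤ l) (hl1 : l < L) (hl0' : 0 ≤ l') (hl1' : l' < L)
    (hne : (Arc L t l ∩ Arc L t' l').Nonempty)
    (hpc : IsPreconnected (Arc L t l ∩ Arc L t' l')) :
    ∃ (t'' : AddCircle L) (l'' : ℝ), 0 ≤ l'' ∧ l'' < L ∧
      Arc L t l ∩ Arc L t' l' = Arc L t'' l'' := by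
  set d := circPos L hL t t' with hd
  have hdm := circPos_mem hL t t'
  have hcrit := (inter_arcs_nonempty_iff hL hl0 hl1 hl0' hl1').1 hne
  by_cases hdl : d ≤ l
  · by_cases hw : L ≤ d + l'
    · rcases eq_or_lt_of_le hdm.1 with hd0 | hd0
      · exfalso
        rw [← hd] at hd0
        rw [← hd0] at hw
        linarith
      · exact absurd hpc (not_preconnected_of_two_overlaps hL hl0 hl1 hl0' hl1' hd0 hdl hw)
    · push_neg at hw
      exact ⟨t', min (l - d) l', le_min (by linarith) hl0',
        lt_of_le_of_lt (min_le_right _ _) hl1',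
        inter_arcs_eq_one hL hl0 hl1 hl0' hl1' hdl hw⟩
  · push_neg at hdl
    have hw : L ≤ d + l' := by
      rcases hcrit with h | h
      · exact absurd h (not_le.2 hdl)
      · exact h
    exact ⟨t, min l (d + l' - L), le_min hl0 (by linarith),
      lt_of_le_of_lt (min_le_left _ _) hl1,
      inter_arcs_eq_two hL hl0 hl1 hl0' hl1' hdl hw⟩

end CircleGeometry

/-! ### Auxiliary combinatorial lemmas about cyclic intervals in `ZMod k` -/

section ZModCombinatorics

variable {k : ℕ} [NeZero k]

theorem natCast_val_eq (z : ZMod k) : ((z.val : ℕ) : ZMod k) = z :=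
  ZMod.natCast_rightInverse z

theorem zmem_iff {a : ZMod k} {m : ℕ} (hm : m ≤ k) (z : ZMod k) :
    z ∈ ZInterval a m ↔ (z - a).val < m := by
  constructor
  · rintro ⟨i, hi, rfl⟩
    have : a + (i : ZMod k) - a = (i : ZMod k) := by ring
    rw [this, ZMod.val_natCast, Nat.mod_eq_of_lt (lt_of_lt_of_le hi hm)]
    exact hi
  · intro h
    refine ⟨(z - a).val, h, ?_⟩
    rw [natCast_val_eq]; ring

theorem zinterval_univ {a : ZMod k} {m : ℕ} (hm : k ≤ m) : ZInterval a m = univ := by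
  ext z
  simp only [mem_univ, iff_true]
  exact ⟨(z - a).val, lt_of_lt_of_le (ZMod.val_lt _) hm, by rw [natCast_val_eq]; ring⟩

theorem zinterval_boundary_unique {a : ZMod k} {m : ℕ} {T : Set (ZMod k)}
    (hT : T = ZInterval a m) {x y : ZMod k}
    (hx : x ∈ T) (hx' : x + 1 ∉ T) (hy : y ∈ T) (hy' : y + 1 ∉ T) : x = y := by
  subst hT
  have hmk : m < k := by
    by_contra h
    push_neg at h
    rw [zinterval_univ h] at hx'
    exact hx' (mem_univ _)
  have key : ∀ z : ZMod k, z ∈ ZInterval a m → z + 1 ∉ ZInterval a m →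
      z = a + ((m - 1 : ℕ) : ZMod k) := by
    intro z hz hz'
    rw [zmem_iff (le_of_lt hmk)] at hz hz'
    set i := (z - a).val with hi
    have him : i < m := hz
    have : z + 1 - a = ((i + 1 : ℕ) : ZMod k) := by
      push_cast
      rw [hi, natCast_val_eq]; ring
    rw [this, ZMod.val_natCast, Nat.mod_eq_of_lt (by omega)] at hz'
    have : i = m - 1 := by omega
    have hz2 : z = a + ((i : ℕ) : ZMod k) := by rw [hi, natCast_val_eq]; ring
    rw [hz2, this]
  rw [key x hx hx', key y hy hy']

theorem val_cast_sub {r p : ℕ} (hr : r < k) (hp : p ≤ k) :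
    ((r : ZMod k) - (p : ZMod k)).val = if p ≤ r then r - p else r + k - p := by
  split_ifs with h
  · rw [← Nat.cast_sub h, ZMod.val_natCast, Nat.mod_eq_of_lt (by omega)]
  · have : ((r + k - p : ℕ) : ZMod k) = (r : ZMod k) - (p : ZMod k) := by
      rw [Nat.cast_sub (by omega), Nat.cast_add, ZMod.natCast_self]
      ring
    rw [← this, ZMod.val_natCast, Nat.mod_eq_of_lt (by omega)]

theorem cyclicConsec_empty {α : Type*} (f : α → ZMod k) : CyclicConsec f (∅ : Set α) := by
  refine ⟨0, 0, ?_⟩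
  ext x
  simp [ZInterval]

theorem cyclicConsec_univ {α : Type*} (e : α ≃ Fin k) :
    CyclicConsec (zOrd e) (univ : Set α) := by
  refine ⟨0, k, ?_⟩
  ext x
  simp only [mem_univ, mem_preimage, true_iff]
  rw [zmem_iff le_rfl]
  exact lt_of_lt_of_le (ZMod.val_lt _) le_rfl

theorem cyclicConsec_interval {α : Type*} (e : α ≃ Fin k) (p q : ℕ) (hq : q < k)
    (S : Set α) (hS : S = {C | p ≤ (e C : ℕ) ∧ (e C : ℕ) ≤ q}) :
    CyclicConsec (zOrd e) S := by
  rcases le_or_gt p q with hpq | hpq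
  · refine ⟨(p : ZMod k), q + 1 - p, ?_⟩
    ext x
    rw [hS, mem_setOf_eq, mem_preimage, zmem_iff (by omega), zOrd,
      val_cast_sub (Fin.is_lt _) (by omega)]
    have := Fin.is_lt (e x)
    split_ifs with h <;> omega
  · rw [hS]
    have : {C | p ≤ (e C : ℕ) ∧ (e C : ℕ) ≤ q} = (∅ : Set α) := by
      ext x; simp only [mem_setOf_eq, mem_empty_iff_false, iff_false]
      omega
    rw [this]
    exact cyclicConsec_empty _

theorem cyclicConsec_cointerval {α : Type*} (e : α ≃ Fin k) (p q : ℕ) (hpq : p ≤ q)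
    (hq : q < k) (S : Set α) (hS : S = {C | (e C : ℕ) < p ∨ q < (e C : ℕ)}) :
    CyclicConsec (zOrd e) S := by
  refine ⟨((q + 1 : ℕ) : ZMod k), k - (q + 1) + p, ?_⟩
  ext x
  rw [hS, mem_setOf_eq, mem_preimage, zmem_iff (by omega), zOrd,
    val_cast_sub (Fin.is_lt _) (by omega)]
  have := Fin.is_lt (e x)
  split_ifs with h <;> omega

theorem cyclicConsec_of_convex {α : Type*} (e : α ≃ Fin k) (S : Set α)
    (hconv : ∀ C₁ C₂ C₃, (e C₁ : ℕ) ≤ (e C₂ : ℕ) → (e C₂ : ℕ) ≤ (e C₃ : ℕ) →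
      C₁ ∈ S → C₃ ∈ S → C₂ ∈ S) :
    CyclicConsec (zOrd e) S := by
  classical
  haveI : Fintype α := Fintype.ofEquiv _ e.symm
  rcases S.eq_empty_or_nonempty with rfl | hne
  · exact cyclicConsec_empty _
  · have hfin : S.toFinset.Nonempty := by rwa [Set.toFinset_nonempty]
    obtain ⟨C₁, hC₁, hmin⟩ := Finset.exists_min_image S.toFinset (fun C => (e C : ℕ)) hfin
    obtain ⟨C₂, hC₂, hmax⟩ := Finset.exists_max_image S.toFinset (fun C => (e C : ℕ)) hfin
    rw [Set.mem_toFinset] at hC₁ hC₂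
    refine cyclicConsec_interval e (e C₁ : ℕ) (e C₂ : ℕ) (Fin.is_lt _) S ?_
    ext x
    simp only [mem_setOf_eq]
    constructor
    · intro hx
      exact ⟨hmin x (Set.mem_toFinset.2 hx), hmax x (Set.mem_toFinset.2 hx)⟩
    · rintro ⟨h1, h2⟩
      exact hconv C₁ x C₂ h1 h2 hC₁ hC₂

theorem cyclicConsec_of_coconvex {α : Type*} (e : α ≃ Fin k) (S : Set α)
    (hconv : ∀ C₁ C₂ C₃, (e C₁ : ℕ) ≤ (e C₂ : ℕ) → (e C₂ : ℕ) ≤ (e C₃ : ℕ) →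
      C₁ ∉ S → C₃ ∉ S → C₂ ∉ S) :
    CyclicConsec (zOrd e) S := by
  classical
  haveI : Fintype α := Fintype.ofEquiv _ e.symm
  rcases (Sᶜ).eq_empty_or_nonempty with hc | hne
  · have : S = univ := by
      rw [← compl_empty, ← hc, compl_compl]
    rw [this]
    exact cyclicConsec_univ e
  · have hfin : (Sᶜ).toFinset.Nonempty := by rwa [Set.toFinset_nonempty]
    obtain ⟨C₁, hC₁, hmin⟩ := Finset.exists_min_image (Sᶜ).toFinset (fun C => (e C : ℕ)) hfin
    obtain ⟨C₂, hC₂, hmax⟩ := Finset.exists_max_image (Sᶜ).toFinset (fun C => (e C : ℕ)) hfin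
    rw [Set.mem_toFinset] at hC₁ hC₂
    refine cyclicConsec_cointerval e (e C₁ : ℕ) (e C₂ : ℕ)
      (hmax C₁ (Set.mem_toFinset.2 hC₁)) (Fin.is_lt _) S ?_
    ext x
    simp only [mem_setOf_eq]
    constructor
    · intro hx
      by_contra h
      push_neg at h
      exact (hconv C₁ x C₂ h.1 h.2 hC₁ hC₂) hx
    · rintro (h | h)
      · by_contra hx
        have := hmin x (Set.mem_toFinset.2 hx); omega
      · by_contra hx
        have := hmax x (Set.mem_toFinset.2 hx); omega

end ZModCombinatorics

theorem nat_mod_two_cases {n r k : ℕ} (hk : 0 < k) (h2 : n < 2 * k) (hr : n % k = r) :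
    n = r ∨ n = r + k := by
  rcases lt_or_ge n k with h | h
  · left; rw [← hr, Nat.mod_eq_of_lt h]
  · right
    have h3 : n - k < k := by omega
    have : n % k = (n - k) % k := by
      conv_lhs => rw [show n = (n - k) + k by omega]
      rw [Nat.add_mod_right]
    rw [this, Nat.mod_eq_of_lt h3] at hr
    omega

/-! ### Maximal cliques -/

theorem exists_maxclique_superset {V : Type*} [Fintype V] (G : SimpleGraph V)
    {S : Set V} (hS : G.IsClique S) : ∃ C : Set V, IsMaxClique G C ∧ S ⊆ C := by
  classical
  have hfam : {D : Set V | G.IsClique D ∧ S ⊆ D}.Finite := Set.toFinite _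
  obtain ⟨C, hC, hCmax⟩ := Set.Finite.exists_maximalFor id _ hfam ⟨S, hS, subset_refl S⟩
  refine ⟨C, ⟨hC.1, fun D hD hCD => ?_⟩, hC.2⟩
  exact Subset.antisymm hCD (hCmax ⟨hD, hC.2.trans hCD⟩ hCD)

/-- A graph without a universal vertex is a normal Helly
circular-arc graph iff there is a cyclic ordering of its maximal cliques in which
(i) for every vertex the cliques containing it are consecutive and (ii) for every
universal pair the cliques containing both are consecutive. -/
theorem nhca_iff_cyclic_clique_order {V : Type*} [Fintype V] (G : SimpleGraph V)
    (hnu : ∀ u : V, ¬ IsUniversalVertex G u) :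
    (∃ (L : ℝ) (R : CARep G L), R.Normal ∧ R.Helly) ↔
    ∃ (k : ℕ) (e : {C : Set V // IsMaxClique G C} ≃ Fin k),
      (∀ v : V, CyclicConsec (zOrd e) {C : {C : Set V // IsMaxClique G C} | v ∈ C.1}) ∧
      (∀ u w : V, IsUniversalPair G u w →
        CyclicConsec (zOrd e) {C : {C : Set V // IsMaxClique G C} | u ∈ C.1 ∧ w ∈ C.1}) := by
  classical
  haveI : Finite (Set V) := inferInstance
  haveI : Fintype {C : Set V // IsMaxClique G C} := Fintype.ofFinite _
  constructor
  · rintro ⟨L, R, hNorm, hHelly⟩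
    rcases isEmpty_or_nonempty V with hV | hV
    · exact ⟨Fintype.card {C : Set V // IsMaxClique G C}, Fintype.equivFin _,
        fun v => (hV.elim v), fun u w _ => (hV.elim u)⟩
    have hL := R.hL
    -- choose a common point of the arcs of each maximal clique
    have hptex : ∀ C : {C : Set V // IsMaxClique G C}, ∃ x, ∀ v ∈ C.1, x ∈ R.arc v := by
      intro C
      have hCne : C.1.Nonempty := by
        rcases C.1.eq_empty_or_nonempty with h | h
        · exfalso
          obtain ⟨v₀⟩ := hV
          have h2 := C.2.2 {v₀} (G.isClique_singleton v₀) (by rw [h]; exact empty_subset _)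
          rw [h] at h2
          exact (singleton_ne_empty v₀) h2.symm
        · exact h
      have hH := hHelly C.1 hCne ?_
      · obtain ⟨x, hx⟩ := hH
        rw [mem_iInter₂] at hx
        exact ⟨x, hx⟩
      · intro a ha b hb
        rcases eq_or_ne a b with rfl | hab
        · exact ⟨R.tail a, ⟨⟨0, le_rfl, R.len_nonneg a, by norm_num⟩,
            ⟨0, le_rfl, R.len_nonneg a, by norm_num⟩⟩⟩
        · exact (R.inter_iff a b hab).2 (C.2.1 ha hb hab)
    choose pt hptSpec using hptex
    -- v belongs to C iff the point of C lies in the arc of v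
    have hmemiff : ∀ (C : {C : Set V // IsMaxClique G C}) (v : V),
        pt C ∈ R.arc v ↔ v ∈ C.1 := by
      intro C v
      constructor
      · intro hx
        have hclique : G.IsClique (insert v C.1) := by
          intro a ha b hb hab
          rcases mem_insert_iff.1 ha with rfl | ha' <;> rcases mem_insert_iff.1 hb with rfl | hb'
          · exact absurd rfl hab
          · exact (R.inter_iff a b hab).1 ⟨pt C, hx, hptSpec C b hb'⟩
          · exact (R.inter_iff a b hab).1 ⟨pt C, hptSpec C a ha', hx⟩
          · exact C.2.1 ha' hb' hab
        have h2 := C.2.2 _ hclique (subset_insert v C.1)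
        rw [h2]
        exact mem_insert v C.1
      · intro hv
        exact hptSpec C v hv
    have hptinj : Function.Injective pt := by
      intro C C' h
      have h2 : ∀ v, v ∈ C.1 ↔ v ∈ C'.1 := fun v => by
        rw [← hmemiff C v, ← hmemiff C' v, h]
      exact Subtype.ext (Set.ext h2)
    set g : {C : Set V // IsMaxClique G C} → ℝ := fun C => circPos L hL 0 (pt C) with hg
    have hginj : Function.Injective g := by
      intro C C' h
      apply hptinj
      have h' : circPos L hL 0 (pt C) = circPos L hL 0 (pt C') := h
      rw [circPos_spec hL 0 (pt C), circPos_spec hL 0 (pt C'), h']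
    set k := Fintype.card {C : Set V // IsMaxClique G C} with hk
    have hαne : Nonempty {C : Set V // IsMaxClique G C} := by
      obtain ⟨C, hC, -⟩ := exists_maxclique_superset G (G.isClique_empty)
      exact ⟨⟨C, hC⟩⟩
    haveI : NeZero k := ⟨by rw [hk]; exact (Fintype.card_pos_iff.2 hαne).ne'⟩
    set s : Finset ℝ := Finset.image g Finset.univ with hs
    have hcard : s.card = k := by
      rw [hs, Finset.card_image_of_injective _ hginj, Finset.card_univ]
    set ι := s.orderIsoOfFin hcard with hι
    have hmemg : ∀ C, g C ∈ s := fun C => by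
      rw [hs]; exact Finset.mem_image_of_mem g (Finset.mem_univ C)
    set F : {C : Set V // IsMaxClique G C} → Fin k := fun C => ι.symm ⟨g C, hmemg C⟩ with hF
    have hFinj : Function.Injective F := by
      intro C C' h
      exact hginj (Subtype.mk_eq_mk.1 (ι.symm.injective h))
    have hFbij : Function.Bijective F :=
      (Fintype.bijective_iff_injective_and_card F).2 ⟨hFinj, by rw [Fintype.card_fin]⟩
    set e : {C : Set V // IsMaxClique G C} ≃ Fin k := Equiv.ofBijective F hFbij with he
    have hmono : ∀ C C' : {C : Set V // IsMaxClique G C},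
        (e C : ℕ) ≤ (e C' : ℕ) ↔ g C ≤ g C' := by
      intro C C'
      rw [show ((e C : ℕ) ≤ (e C' : ℕ)) ↔ e C ≤ e C' from (Fin.le_def).symm]
      show ι.symm ⟨g C, hmemg C⟩ ≤ ι.symm ⟨g C', hmemg C'⟩ ↔ g C ≤ g C'
      rw [ι.symm.le_iff_le]
      exact Subtype.mk_le_mk
    -- the cliques whose point lies in a given arc are cyclically consecutive
    have hconsec : ∀ (t : AddCircle L) (l : ℝ), 0 ≤ l → l < L →
        CyclicConsec (zOrd e) {C : {C : Set V // IsMaxClique G C} | pt C ∈ Arc L t l} := by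
      intro t l hl0 hl1
      have hδm := circPos_mem hL 0 t
      have hgm : ∀ C, g C ∈ Ico (0:ℝ) L := fun C => circPos_mem hL 0 (pt C)
      have hiff : ∀ C, pt C ∈ Arc L t l ↔
          ((circPos L hL 0 t ≤ g C ∧ g C ≤ circPos L hL 0 t + l) ∨
            g C ≤ circPos L hL 0 t + l - L) := by
        intro C
        rw [mem_Arc_iff hL hl1]
        rcases circPos_shift hL 0 t (pt C) with ⟨h1, h2⟩ | ⟨h1, h2⟩
        · rw [h2]
          constructor
          · intro h; left; exact ⟨h1, by linarith⟩
          · rintro (⟨_, hh⟩ | hh) <;> linarith [(hgm C).1, hδm.1]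
        · rw [h2]
          constructor
          · intro h; right; linarith
          · rintro (⟨hh, _⟩ | hh)
            · linarith
            · linarith
      by_cases hcase : circPos L hL 0 t + l < L
      · apply cyclicConsec_of_convex e
        intro C₁ C₂ C₃ h12 h23 hC₁ hC₃
        rw [mem_setOf_eq, hiff] at hC₁ hC₃
        rw [mem_setOf_eq, hiff]
        rw [hmono] at h12 h23
        rcases hC₁ with ⟨hA, hB⟩ | hB
        · rcases hC₃ with ⟨hA', hB'⟩ | hB'
          · left; exact ⟨by linarith, by linarith⟩
          · exfalso; linarith [(hgm C₃).1]
        · exfalso; linarith [(hgm C₁).1]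
      · push_neg at hcase
        apply cyclicConsec_of_coconvex e
        intro C₁ C₂ C₃ h12 h23 hC₁ hC₃
        rw [hmono] at h12 h23
        have hlt : ∀ C, C ∉ {C : {C : Set V // IsMaxClique G C} | pt C ∈ Arc L t l} →
            (circPos L hL 0 t + l - L < g C ∧ g C < circPos L hL 0 t) := by
          intro C hC
          rw [mem_setOf_eq, hiff] at hC
          push_neg at hC
          refine ⟨hC.2, ?_⟩
          by_contra hge
          push_neg at hge
          have h3 := hC.1 hge
          linarith [(hgm C).2]
        obtain ⟨hA1, hB1⟩ := hlt C₁ hC₁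
        obtain ⟨hA3, hB3⟩ := hlt C₃ hC₃
        intro hC₂
        rw [mem_setOf_eq, hiff] at hC₂
        rcases hC₂ with ⟨hA2, _⟩ | hA2
        · linarith
        · linarith
    refine ⟨k, e, ?_, ?_⟩
    · intro v
      have h2 : {C : {C : Set V // IsMaxClique G C} | v ∈ C.1} =
          {C : {C : Set V // IsMaxClique G C} | pt C ∈ Arc L (R.tail v) (R.len v)} := by
        ext C
        rw [mem_setOf_eq, mem_setOf_eq]
        exact ((hmemiff C v).symm : v ∈ C.1 ↔ pt C ∈ R.arc v)
      rw [h2]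
      exact hconsec _ _ (R.len_nonneg v) (R.len_lt v)
    · intro u w hp
      have hne := hp.1.ne
      have hinter : ((Arc L (R.tail u) (R.len u)) ∩ (Arc L (R.tail w) (R.len w))).Nonempty :=
        (R.inter_iff u w hne).2 hp.1
      have hpc : IsPreconnected ((Arc L (R.tail u) (R.len u)) ∩ (Arc L (R.tail w) (R.len w))) :=
        hNorm u w hne
      obtain ⟨t'', l'', h0'', h1'', heq⟩ := inter_arcs_eq_arc hL (R.len_nonneg u) (R.len_lt u)
        (R.len_nonneg w) (R.len_lt w) hinter hpc
      have h2 : {C : {C : Set V // IsMaxClique G C} | u ∈ C.1 ∧ w ∈ C.1} =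
          {C : {C : Set V // IsMaxClique G C} | pt C ∈ Arc L t'' l''} := by
        ext C
        rw [mem_setOf_eq, mem_setOf_eq, ← hmemiff C u, ← hmemiff C w, ← mem_inter_iff, ← heq]
        exact Iff.rfl
      rw [h2]
      exact hconsec _ _ h0'' h1''
  · rintro ⟨k, e, h1, h2⟩
    rcases isEmpty_or_nonempty V with hV | hV
    · refine ⟨1, ⟨one_pos, fun v => 0, fun v => 0, fun v => le_rfl, fun v => one_pos,
        fun u v h => (hV.elim u)⟩, fun u v h => (hV.elim u), fun S hSne _ => ?_⟩
      obtain ⟨v, _⟩ := hSne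
      exact (hV.elim v)
    -- setup
    have hαne : Nonempty {C : Set V // IsMaxClique G C} := by
      obtain ⟨C, hC, -⟩ := exists_maxclique_superset G (G.isClique_empty)
      exact ⟨⟨C, hC⟩⟩
    have hk : 0 < k := by
      obtain ⟨C⟩ := hαne
      exact (e C).pos
    haveI : NeZero k := ⟨hk.ne'⟩
    have hfsurj : ∀ z : ZMod k, ∃ C : {C : Set V // IsMaxClique G C}, zOrd e C = z := by
      intro z
      refine ⟨e.symm ⟨z.val, ZMod.val_lt z⟩, ?_⟩
      show ((e (e.symm ⟨z.val, ZMod.val_lt z⟩) : ℕ) : ZMod k) = z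
      rw [Equiv.apply_symm_apply]
      exact natCast_val_eq z
    -- each vertex's clique-set is an exact proper interval
    have hvdata : ∀ v : V, ∃ (a : ZMod k) (m : ℕ), 1 ≤ m ∧ m < k ∧
        {C : {C : Set V // IsMaxClique G C} | v ∈ C.1} = zOrd e ⁻¹' ZInterval a m := by
      intro v
      obtain ⟨a, m, hm⟩ := h1 v
      obtain ⟨Cv, hCv, hvCv⟩ := exists_maxclique_superset G (G.isClique_singleton v)
      have hne : (⟨Cv, hCv⟩ : {C : Set V // IsMaxClique G C}) ∈
          {C : {C : Set V // IsMaxClique G C} | v ∈ C.1} := hvCv rfl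
      obtain ⟨w, hwv, hnadj⟩ : ∃ w, w ≠ v ∧ ¬ G.Adj v w := by
        have := hnu v
        unfold IsUniversalVertex at this
        push_neg at this
        exact this
      obtain ⟨Cw, hCw, hwCw⟩ := exists_maxclique_superset G (G.isClique_singleton w)
      have hvnot : v ∉ Cw := by
        intro hv
        exact hnadj (hCw.1 hv (hwCw rfl) (Ne.symm hwv))
      have hm1 : 1 ≤ m := by
        rw [hm] at hne
        obtain ⟨i, hi, -⟩ := hne
        omega
      have hmk : m < k := by
        by_contra hcon
        push_neg at hcon
        have : (⟨Cw, hCw⟩ : {C : Set V // IsMaxClique G C}) ∈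
            {C : {C : Set V // IsMaxClique G C} | v ∈ C.1} := by
          rw [hm, mem_preimage, zinterval_univ hcon]
          exact mem_univ _
        exact hvnot this
      exact ⟨a, m, hm1, hmk, hm⟩
    choose aa mm hm1 hmk hSv using hvdata
    have hL : (0:ℝ) < (k : ℝ) := by positivity
    set L : ℝ := (k : ℝ) with hLdef
    set φ : ZMod k → AddCircle L := fun z => ((z.val : ℝ) : AddCircle L) with hφ
    -- relation between positions of lattice points
    have hpos : ∀ x y : ZMod k, circPos L hL (φ x) (φ y) = ((y - x).val : ℝ) := by
      intro x y
      have hval : (x.val + (y - x).val) % k = y.val := by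
        conv_rhs => rw [show y = x + (y - x) by ring]
        rw [ZMod.val_add]
      have hcases := nat_mod_two_cases hk
        (by have := ZMod.val_lt x; have := ZMod.val_lt (y - x); omega) hval
      have h1' : φ y = φ x + (((((y - x).val : ℕ) : ℝ)) : AddCircle L) := by
        show ((y.val : ℝ) : AddCircle L) = _
        rw [show ((x.val : ℝ) : AddCircle L) + (((((y - x).val : ℕ) : ℝ)) : AddCircle L)
            = (((x.val + (y - x).val : ℕ) : ℝ) : AddCircle L) by push_cast; rw [AddCircle.coe_add]]
        rcases hcases with h | h
        · rw [h]
        · rw [h]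
          push_cast
          rw [AddCircle.coe_add]
          rw [show ((L : ℝ) : AddCircle L) = 0 from AddCircle.coe_period L, add_zero]
      rw [h1', circPos_add hL _ (by positivity)
        (by rw [hLdef]; exact_mod_cast ZMod.val_lt (y - x))]
    have hlen0 : ∀ v : V, (0:ℝ) ≤ (mm v : ℝ) - 1 := by
      intro v
      have h' : (1:ℝ) ≤ (mm v : ℝ) := by exact_mod_cast hm1 v
      linarith
    have hlenL : ∀ v : V, (mm v : ℝ) - 1 < L := by
      intro v
      have h' : (mm v : ℝ) < (k : ℝ) := by exact_mod_cast hmk v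
      rw [hLdef]; linarith
    -- membership of lattice points in arcs
    have hmem : ∀ (v : V) (z : ZMod k),
        φ z ∈ Arc L (φ (aa v)) ((mm v : ℝ) - 1) ↔ (z - aa v).val < mm v := by
      intro v z
      rw [mem_Arc_iff hL (hlenL v), hpos]
      constructor
      · intro h
        have h' : ((z - aa v).val : ℝ) + 1 ≤ (mm v : ℝ) := by linarith
        exact_mod_cast h'
      · intro h
        have h' : ((z - aa v).val : ℝ) + 1 ≤ (mm v : ℝ) := by exact_mod_cast h
        linarith
    -- membership of clique points
    have hmemC : ∀ (v : V) (C : {C : Set V // IsMaxClique G C}),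
        φ (zOrd e C) ∈ Arc L (φ (aa v)) ((mm v : ℝ) - 1) ↔ v ∈ C.1 := by
      intro v C
      rw [hmem v (zOrd e C)]
      have h' : C ∈ {C : {C : Set V // IsMaxClique G C} | v ∈ C.1} ↔
          zOrd e C ∈ ZInterval (aa v) (mm v) := by
        rw [hSv v]; rfl
      rw [mem_setOf_eq] at h'
      rw [← zmem_iff (le_of_lt (hmk v)), ← h']
    -- membership in interval iff membership in clique (ZMod form)
    have hmemzC : ∀ (w : V) (C : {C : Set V // IsMaxClique G C}),
        (zOrd e C - aa w).val < mm w ↔ w ∈ C.1 := by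
      intro w C
      rw [← zmem_iff (le_of_lt (hmk w))]
      constructor
      · intro hz
        have h' : C ∈ {D : {C : Set V // IsMaxClique G C} | w ∈ D.1} := by
          rw [hSv w]; exact hz
        exact h'
      · intro hw
        have h' : C ∈ zOrd e ⁻¹' ZInterval (aa w) (mm w) := by rw [← hSv w]; exact hw
        exact h'
    -- membership of z in both intervals gives adjacency
    have hadjOf : ∀ (u v : V), u ≠ v → ∀ z : ZMod k,
        (z - aa u).val < mm u → (z - aa v).val < mm v → G.Adj u v := by
      intro u v huv z hz1 hz2
      obtain ⟨C, hC⟩ := hfsurj z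
      have hu : u ∈ C.1 := by
        have h' : C ∈ {D : {C : Set V // IsMaxClique G C} | u ∈ D.1} := by
          rw [hSv u, mem_preimage, hC, zmem_iff (le_of_lt (hmk u))]
          exact hz1
        exact h'
      have hv : v ∈ C.1 := by
        have h' : C ∈ {D : {C : Set V // IsMaxClique G C} | v ∈ D.1} := by
          rw [hSv v, mem_preimage, hC, zmem_iff (le_of_lt (hmk v))]
          exact hz2
        exact h'
      exact C.2.1 hu hv huv
    -- the intersection criterion
    have hinter : ∀ u v : V, u ≠ v →
        ((Arc L (φ (aa u)) ((mm u : ℝ) - 1) ∩ Arc L (φ (aa v)) ((mm v : ℝ) - 1)).Nonempty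
          ↔ G.Adj u v) := by
      intro u v huv
      constructor
      · intro hne
        have hcrit := (inter_arcs_nonempty_iff hL (hlen0 u) (hlenL u) (hlen0 v) (hlenL v)).1 hne
        rw [hpos] at hcrit
        rcases hcrit with h | h
        · refine hadjOf u v huv (aa v) ?_ ?_
          · have h' : ((aa v - aa u).val : ℝ) + 1 ≤ (mm u : ℝ) := by linarith
            exact_mod_cast h'
          · simp only [sub_self, ZMod.val_zero]
            exact hm1 v
        · -- wrap-around case: aa u lies in both intervals
          have hnat : k + 1 ≤ (aa v - aa u).val + mm v := by
            have h' : (k : ℝ) + 1 ≤ ((aa v - aa u).val : ℝ) + (mm v : ℝ) := by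
              rw [hLdef] at h; linarith
            exact_mod_cast h'
          have hdn0 : aa v - aa u ≠ 0 := by
            intro h0
            rw [h0] at hnat
            simp only [ZMod.val_zero, zero_add] at hnat
            have := hmk v
            omega
          have hval : (aa u - aa v).val = k - (aa v - aa u).val := by
            rw [show aa u - aa v = -(aa v - aa u) by ring, ZMod.neg_val, if_neg hdn0]
          refine hadjOf u v huv (aa u) ?_ ?_
          · simp only [sub_self, ZMod.val_zero]
            exact hm1 u
          · rw [hval]
            have := ZMod.val_lt (aa v - aa u)
            omega
      · intro hadj
        obtain ⟨C, hC, hsub⟩ := exists_maxclique_superset G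
          ((SimpleGraph.isClique_pair (G := G)).2 (fun _ => hadj))
        refine ⟨φ (zOrd e ⟨C, hC⟩), ?_, ?_⟩
        · exact (hmemC u ⟨C, hC⟩).2 (hsub (by simp))
        · exact (hmemC v ⟨C, hC⟩).2 (hsub (by simp))
    refine ⟨L, ⟨hL, fun v => φ (aa v), fun v => (mm v : ℝ) - 1, hlen0, hlenL, hinter⟩, ?_, ?_⟩
    · -- Normal
      intro u v huv
      show IsPreconnected
        (Arc L (φ (aa u)) ((mm u : ℝ) - 1) ∩ Arc L (φ (aa v)) ((mm v : ℝ) - 1))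
      have hd : circPos L hL (φ (aa u)) (φ (aa v)) = (((aa v - aa u).val : ℕ) : ℝ) :=
        hpos (aa u) (aa v)
      by_cases h1c : circPos L hL (φ (aa u)) (φ (aa v)) ≤ (mm u : ℝ) - 1
      · by_cases h2c : L ≤ circPos L hL (φ (aa u)) (φ (aa v)) + ((mm v : ℝ) - 1)
        · -- the forbidden configuration: derive a contradiction
          exfalso
          set dn := (aa v - aa u).val with hdndef
          have hdu : dn + 1 ≤ mm u := by
            rw [hd] at h1c
            have h' : ((dn : ℕ) : ℝ) + 1 ≤ (mm u : ℝ) := by linarith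
            exact_mod_cast h'
          have hdv : k + 1 ≤ dn + mm v := by
            rw [hd, hLdef] at h2c
            have h' : (k : ℝ) + 1 ≤ ((dn : ℕ) : ℝ) + (mm v : ℝ) := by linarith
            exact_mod_cast h'
          have hu_k : mm u < k := hmk u
          have hv_k : mm v < k := hmk v
          have hdn2 : 2 ≤ dn := by omega
          set e₂ : ℕ := dn + mm v - 1 - k with he₂def
          have he₂ : e₂ + k + 1 = dn + mm v := by omega
          have he₂dn : e₂ + 2 ≤ dn := by omega
          -- u, v form a universal pair
          have hpair : IsUniversalPair G u v := by
            constructor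
            · refine hadjOf u v huv (aa v) ?_ ?_
              · rw [← hdndef]; omega
              · simp only [sub_self, ZMod.val_zero]; exact hm1 v
            · intro x
              obtain ⟨Cx, hCx, hxCx⟩ := exists_maxclique_superset G (G.isClique_singleton x)
              set C : {C : Set V // IsMaxClique G C} := ⟨Cx, hCx⟩ with hCdef
              have hxC : x ∈ C.1 := hxCx rfl
              set j := (zOrd e C - aa u).val with hjdef
              rcases lt_or_ge j (mm u) with hj | hj
              · -- u ∈ Cx
                have hu : u ∈ C.1 := (hmemzC u C).1 hj
                by_cases hxu : x = u
                · subst hxu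
                  right
                  exact (hadjOf x v huv (aa v) (by rw [← hdndef]; omega)
                    (by simp only [sub_self, ZMod.val_zero]; exact hm1 v)).symm
                · left
                  exact C.2.1 hu hxC (Ne.symm hxu)
              · -- v ∈ Cx
                have hjk : j < k := ZMod.val_lt _
                have hzv : (zOrd e C - aa v).val = j - dn := by
                  have hrw : zOrd e C - aa v = ((j : ℕ) : ZMod k) - ((dn : ℕ) : ZMod k) := by
                    rw [hjdef, hdndef, natCast_val_eq, natCast_val_eq]
                    ring
                  rw [hrw, val_cast_sub hjk (le_of_lt (ZMod.val_lt (aa v - aa u))),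
                    if_pos (by omega)]
                have hv : v ∈ C.1 := (hmemzC v C).1 (by rw [hzv]; omega)
                by_cases hxv : x = v
                · subst hxv
                  left
                  exact hadjOf u x huv (aa x) (by rw [← hdndef]; omega)
                    (by simp only [sub_self, ZMod.val_zero]; exact hm1 x)
                · right
                  exact C.2.1 hv hxC (Ne.symm hxv)
          obtain ⟨b, m'', hbm⟩ := h2 u v hpair
          -- the set of cliques containing both u and v, in ZMod form
          have hTz : ∀ z : ZMod k, z ∈ ZInterval b m'' ↔
              ((z - aa u).val < mm u ∧ (z - aa v).val < mm v) := by
            intro z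
            obtain ⟨C, hC⟩ := hfsurj z
            rw [← hC]
            constructor
            · intro hz
              have hmemT : C ∈ {C : {C : Set V // IsMaxClique G C} | u ∈ C.1 ∧ v ∈ C.1} := by
                rw [hbm, mem_preimage]
                exact hz
              exact ⟨(hmemzC u C).2 hmemT.1, (hmemzC v C).2 hmemT.2⟩
            · rintro ⟨hzu, hzv⟩
              have hmemT : C ∈ {C : {C : Set V // IsMaxClique G C} | u ∈ C.1 ∧ v ∈ C.1} :=
                ⟨(hmemzC u C).1 hzu, (hmemzC v C).1 hzv⟩
              rw [hbm, mem_preimage] at hmemT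
              exact hmemT
          have hj : ∀ i : ℕ, i < k → ((aa u + (i : ZMod k)) - aa u).val = i := by
            intro i hi
            rw [show aa u + (i : ZMod k) - aa u = (i : ZMod k) by ring,
              ZMod.val_natCast, Nat.mod_eq_of_lt hi]
          have hjv : ∀ i : ℕ, i < k →
              ((aa u + (i : ZMod k)) - aa v).val = if dn ≤ i then i - dn else i + k - dn := by
            intro i hi
            have hrw : aa u + (i : ZMod k) - aa v = (i : ZMod k) - ((dn : ℕ) : ZMod k) := by
              rw [hdndef, natCast_val_eq]
              ring
            rw [hrw, val_cast_sub hi (le_of_lt (ZMod.val_lt (aa v - aa u)))]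
          set x₁ : ZMod k := aa u + ((e₂ : ℕ) : ZMod k) with hx₁def
          set x₂ : ZMod k := aa u + (((mm u - 1 : ℕ)) : ZMod k) with hx₂def
          have hx₁mem : x₁ ∈ ZInterval b m'' := by
            rw [hTz, hj e₂ (by omega), hjv e₂ (by omega), if_neg (by omega)]
            omega
          have hx₁not : x₁ + 1 ∉ ZInterval b m'' := by
            have hrw : x₁ + 1 = aa u + (((e₂ + 1 : ℕ)) : ZMod k) := by
              rw [hx₁def]; push_cast; ring
            rw [hrw, hTz, hj (e₂ + 1) (by omega), hjv (e₂ + 1) (by omega),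
              if_neg (by omega)]
            omega
          have hx₂mem : x₂ ∈ ZInterval b m'' := by
            rw [hTz, hj (mm u - 1) (by omega), hjv (mm u - 1) (by omega), if_pos (by omega)]
            omega
          have hx₂not : x₂ + 1 ∉ ZInterval b m'' := by
            have hrw : x₂ + 1 = aa u + (((mm u : ℕ)) : ZMod k) := by
              rw [hx₂def]
              have : ((mm u - 1 : ℕ) : ZMod k) + 1 = ((mm u : ℕ) : ZMod k) := by
                rw [show mm u = (mm u - 1) + 1 by omega]
                push_cast
                ring
              rw [add_assoc, this]
            rw [hrw, hTz, hj (mm u) (by omega)]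
            omega
          have heq : x₁ = x₂ :=
            zinterval_boundary_unique rfl hx₁mem hx₁not hx₂mem hx₂not
          have : e₂ = mm u - 1 := by
            have h' := congrArg (fun z => (z - aa u).val) heq
            simpa only [hx₁def, hx₂def, hj e₂ (by omega), hj (mm u - 1) (by omega)] using h'
          omega
        · push_neg at h2c
          rw [inter_arcs_eq_one hL (hlen0 u) (hlenL u) (hlen0 v) (hlenL v) h1c h2c]
          exact isPreconnected_Arc _ _
      · push_neg at h1c
        by_cases h2c : L ≤ circPos L hL (φ (aa u)) (φ (aa v)) + ((mm v : ℝ) - 1)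
        · rw [inter_arcs_eq_two hL (hlen0 u) (hlenL u) (hlen0 v) (hlenL v) h1c h2c]
          exact isPreconnected_Arc _ _
        · push_neg at h2c
          have hempty : ¬ (Arc L (φ (aa u)) ((mm u : ℝ) - 1) ∩
              Arc L (φ (aa v)) ((mm v : ℝ) - 1)).Nonempty := by
            rw [inter_arcs_nonempty_iff hL (hlen0 u) (hlenL u) (hlen0 v) (hlenL v)]
            push_neg
            exact ⟨h1c, h2c⟩
          rw [not_nonempty_iff_eq_empty] at hempty
          rw [hempty]
          exact isPreconnected_empty
    · -- Helly
      intro S hSne hSpair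
      have hclique : G.IsClique S := by
        intro u hu v hv huv
        exact (hinter u v huv).1 (hSpair u hu v hv)
      obtain ⟨C, hC, hsub⟩ := exists_maxclique_superset G hclique
      refine ⟨φ (zOrd e ⟨C, hC⟩), ?_⟩
      rw [mem_iInter₂]
      intro v hv
      exact (hmemC v ⟨C, hC⟩).2 (hsub hv)
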